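/- For any bNTA A over Γ × {0,1}, there exists a monotone bNTA A' over Γ × {0,1} with the same state set such that for every monotone query it tests: if for all (Γ×{0,1})-trees T, acceptance of T by A depends monotonically on the 0/1 annotations (i.e., the language of A is closed under increasing annotations), then A' accepts exactly the same trees as A. Concretely, defining ι'((τ,i)) = ⋃_{0≤j≤i} ι((τ,j)) and δ'(q₁,q₂,(τ,i)) = ⋃_{0≤j≤i} δ(q₁,q₂,(τ,j)), the automaton A' is monotone, and if the language of A is upward-closed under the pointwise order on annotations, then A' accepts a tree T if and only if A accepts T. -/
import Mathlib



/-- A full binary tree with nodes labeled by elements of `Γ`. -/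
inductive BTree (Γ : Type) : Type
  | leaf (a : Γ) : BTree Γ
  | node (a : Γ) (l r : BTree Γ) : BTree Γ

/-- The label of the root of a tree. -/
def BTree.root {Γ : Type} : BTree Γ → Γ
  | .leaf a => a
  | .node a _ _ => a

/-- A bottom-up nondeterministic tree automaton over alphabet `Γ` with states `Q`. -/
structure BNTA (Γ Q : Type) where
  F : Set Q
  init : Γ → Set Q
  δ : Q → Q → Γ → Set Q

/-- `IsRun A T ρ`: `ρ` is a run of the automaton `A` on the tree `T`
(represented as a tree of states with the same skeleton as `T`). -/
inductive IsRun {Γ Q : Type} (A : BNTA Γ Q) : BTree Γ → BTree Q → Prop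
  | leaf {a : Γ} {q : Q} : q ∈ A.init a → IsRun A (.leaf a) (.leaf q)
  | node {a : Γ} {q : Q} {l r : BTree Γ} {ρl ρr : BTree Q} :
      IsRun A l ρl → IsRun A r ρr → q ∈ A.δ ρl.root ρr.root a →
      IsRun A (.node a l r) (.node q ρl ρr)

/-- `A` accepts `T`: there is an accepting run of `A` on `T`. -/
def Accepts {Γ Q : Type} (A : BNTA Γ Q) (T : BTree Γ) : Prop :=
  ∃ ρ : BTree Q, IsRun A T ρ ∧ ρ.root ∈ A.F

/-- Pointwise order on annotated trees: same skeleton, same `Γ`-labels, larger annotations. -/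
inductive TLE {Γ : Type} : BTree (Γ × Bool) → BTree (Γ × Bool) → Prop
  | leaf {a : Γ} {b b' : Bool} : b ≤ b' → TLE (.leaf (a, b)) (.leaf (a, b'))
  | node {a : Γ} {b b' : Bool} {l r l' r' : BTree (Γ × Bool)} :
      b ≤ b' → TLE l l' → TLE r r' → TLE (.node (a, b) l r) (.node (a, b') l' r')

/-- A bNTA over `Γ × Bool` is monotone: initial and transition relations are monotone
in the label, for the order `(τ,0) < (τ,1)`. -/
def MonotoneBNTA {Γ Q : Type} (A : BNTA (Γ × Bool) Q) : Prop :=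
  ∀ τ : Γ, A.init (τ, false) ⊆ A.init (τ, true) ∧
    ∀ q1 q2 : Q, A.δ q1 q2 (τ, false) ⊆ A.δ q1 q2 (τ, true)

/-- The monotone lifting `A'` of `A`:
`ι'((τ,i)) = ⋃_{j ≤ i} ι((τ,j))` and `δ'(q₁,q₂,(τ,i)) = ⋃_{j ≤ i} δ(q₁,q₂,(τ,j))`. -/
def liftBNTA {Γ Q : Type} (A : BNTA (Γ × Bool) Q) : BNTA (Γ × Bool) Q where
  F := A.F
  init := fun p => {q | ∃ j : Bool, j ≤ p.2 ∧ q ∈ A.init (p.1, j)}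
  δ := fun q1 q2 p => {q | ∃ j : Bool, j ≤ p.2 ∧ q ∈ A.δ q1 q2 (p.1, j)}

lemma isRun_lift_of_isRun {Γ Q : Type} (A : BNTA (Γ × Bool) Q) {T : BTree (Γ × Bool)}
    {ρ : BTree Q} (h : IsRun A T ρ) : IsRun (liftBNTA A) T ρ := by
  induction h with
  | leaf h => exact IsRun.leaf ⟨_, le_refl _, h⟩
  | node _ _ h ihl ihr => exact IsRun.node ihl ihr ⟨_, le_refl _, h⟩

lemma exists_le_of_isRun_lift {Γ Q : Type} (A : BNTA (Γ × Bool) Q) {T : BTree (Γ × Bool)}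
    {ρ : BTree Q} (h : IsRun (liftBNTA A) T ρ) :
    ∃ T' : BTree (Γ × Bool), TLE T' T ∧ IsRun A T' ρ := by
  induction h with
  | @leaf a q h =>
    obtain ⟨j, hj, hq⟩ := h
    exact ⟨.leaf (a.1, j), TLE.leaf hj, IsRun.leaf hq⟩
  | @node a q l r ρl ρr _ _ h ihl ihr =>
    obtain ⟨Tl, hTl, hRl⟩ := ihl
    obtain ⟨Tr, hTr, hRr⟩ := ihr
    obtain ⟨j, hj, hq⟩ := h
    exact ⟨.node (a.1, j) Tl Tr, TLE.node hj hTl hTr, IsRun.node hRl hRr hq⟩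

/-- The lifted automaton `A'` is monotone; and if the language of `A` is upward-closed
under the pointwise order on annotations, then `A'` accepts a tree `T` iff `A` does. -/
theorem liftBNTA_monotone_and_equivalent {Γ Q : Type} (A : BNTA (Γ × Bool) Q) :
    MonotoneBNTA (liftBNTA A) ∧
      ((∀ T T' : BTree (Γ × Bool), TLE T T' → Accepts A T → Accepts A T') →
        ∀ T : BTree (Γ × Bool), Accepts (liftBNTA A) T ↔ Accepts A T) := by
  constructor
  · intro τ
    refine ⟨fun q hq => ?_, fun q1 q2 q hq => ?_⟩
    · obtain ⟨j, _, h⟩ := hq; exact ⟨j, Bool.le_true j, h⟩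
    · obtain ⟨j, _, h⟩ := hq; exact ⟨j, Bool.le_true j, h⟩
  · intro hup T
    constructor
    · rintro ⟨ρ, hρ, hF⟩
      obtain ⟨T', hle, hrun⟩ := exists_le_of_isRun_lift A hρ
      exact hup T' T hle ⟨ρ, hrun, hF⟩
    · rintro ⟨ρ, hρ, hF⟩
      exact ⟨ρ, isRun_lift_of_isRun A hρ, hF⟩
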